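/- arXiv:1801.09456 — 3 statements merged into one kernel-verified Lean document; each statement's English description precedes it below -/
import Mathlib

section
/- Let Z_1, Z_2, … be an infinite sequence of independent standard normal random variables and let Z_(n) = max(Z_1, …, Z_n) be the sample maximum of the first n variables. Then, as n → ∞, the normalized maximum √(2 log n) · Z_(n) − 2 log n + (1/2) log(4π log n) converges in distribution to the standard Gumbel distribution G_3, whose cumulative distribution function is exp(−e^{−z}). -/
/-!
Put `a = √(2 log n)` and `u = a + (z - log (√(2π) a)) / a`. The normalized maximum is at most `z`
exactly when every `Z_j` with `j < n` is at most `u`, so by independence its distribution function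
at `z` is `(1 - q)^n` with `q = P(Z_0 > u)`. Mills' ratio `P(Z_0 > t) ~ e^{-t²/2} / (√(2π) t)`
comes from squeezing the tail integral with `-e^{-s²/2} / s`, an antiderivative of
`(1 + s⁻²) e^{-s²/2}`. Since `n = e^{a²/2}` and `a u - a² = z - log (√(2π) a)`, it gives
`n q → e^{-z}`, hence `(1 - q)^n → exp (-e^{-z})`. Pointwise convergence of distribution functions
gives weak convergence because the half-open intervals form a π-system containing arbitrarily
small neighbourhoods of every point.
-/

open MeasureTheory ProbabilityTheory Filter Topology BoundedContinuousFunction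

/-- The `k`-th order statistic (1-based rank) of the values `v : Fin n → ℝ`:
the `k`-th smallest value of the sample. -/
noncomputable def orderStat {n : ℕ} (v : Fin n → ℝ) (k : ℕ) : ℝ :=
  if h : k - 1 < n then v (Tuple.sort v ⟨k - 1, h⟩) else 0

open Real Set Asymptotics

lemma hasDerivAt_neg_exp_neg_sq_div_two_div {s : ℝ} (hs : s ≠ 0) :
    HasDerivAt (fun x => -(exp (-x ^ 2 / 2) / x)) ((1 + (s ^ 2)⁻¹) * exp (-s ^ 2 / 2)) s := by
  have h : HasDerivAt (fun x : ℝ => -x ^ 2 / 2) (-s) s :=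
    ((hasDerivAt_pow 2 s).neg.div_const 2).congr_deriv (by ring)
  exact (h.exp.div (hasDerivAt_id' s) hs).neg.congr_deriv (by field_simp; ring)

lemma tendsto_exp_neg_sq_div_two_atTop : Tendsto (fun x : ℝ => exp (-x ^ 2 / 2)) atTop (𝓝 0) :=
  tendsto_exp_atBot.comp <| (tendsto_neg_atTop_atBot.comp <|
    (tendsto_pow_atTop two_ne_zero).atTop_div_const two_pos).congr fun _ => (neg_div _ _).symm

lemma tendsto_neg_exp_neg_sq_div_two_div_atTop :
    Tendsto (fun x : ℝ => -(exp (-x ^ 2 / 2) / x)) atTop (𝓝 0) := by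
  simpa using (tendsto_exp_neg_sq_div_two_atTop.div_atTop tendsto_id).neg

lemma integrableOn_Ioi_one_add_inv_sq_mul_exp_neg_sq_div_two {t : ℝ} (ht : 0 < t) :
    IntegrableOn (fun s => (1 + (s ^ 2)⁻¹) * exp (-s ^ 2 / 2)) (Ioi t) :=
  integrableOn_Ioi_deriv_of_nonneg'
    (fun s hs => hasDerivAt_neg_exp_neg_sq_div_two_div (ht.trans_le hs).ne')
    (fun s _ => by positivity) tendsto_neg_exp_neg_sq_div_two_div_atTop

lemma integral_Ioi_one_add_inv_sq_mul_exp_neg_sq_div_two {t : ℝ} (ht : 0 < t) :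
    ∫ s in Ioi t, (1 + (s ^ 2)⁻¹) * exp (-s ^ 2 / 2) = exp (-t ^ 2 / 2) / t := by
  rw [integral_Ioi_of_hasDerivAt_of_nonneg'
    (fun s hs => hasDerivAt_neg_exp_neg_sq_div_two_div (ht.trans_le hs).ne')
    (fun s _ => by positivity) tendsto_neg_exp_neg_sq_div_two_div_atTop]
  ring

lemma integrable_exp_neg_sq_div_two : Integrable fun s : ℝ => exp (-s ^ 2 / 2) := by
  simpa [div_eq_mul_inv, mul_comm] using integrable_exp_neg_mul_sq (b := 1 / 2) (by norm_num)

lemma integral_Ioi_exp_neg_sq_div_two_le {t : ℝ} (ht : 0 < t) :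
    ∫ s in Ioi t, exp (-s ^ 2 / 2) ≤ exp (-t ^ 2 / 2) / t := by
  rw [← integral_Ioi_one_add_inv_sq_mul_exp_neg_sq_div_two ht]
  refine setIntegral_mono_on integrable_exp_neg_sq_div_two.integrableOn
    (integrableOn_Ioi_one_add_inv_sq_mul_exp_neg_sq_div_two ht) measurableSet_Ioi fun s _ => ?_
  have : 0 ≤ (s ^ 2)⁻¹ * exp (-s ^ 2 / 2) := by positivity
  linarith

lemma exp_neg_sq_div_two_div_le_integral_Ioi {t : ℝ} (ht : 0 < t) :
    exp (-t ^ 2 / 2) / t ≤ (1 + (t ^ 2)⁻¹) * ∫ s in Ioi t, exp (-s ^ 2 / 2) := by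
  rw [← integral_Ioi_one_add_inv_sq_mul_exp_neg_sq_div_two ht, ← integral_const_mul]
  refine setIntegral_mono_on (integrableOn_Ioi_one_add_inv_sq_mul_exp_neg_sq_div_two ht)
    (integrable_exp_neg_sq_div_two.integrableOn.const_mul _) measurableSet_Ioi fun s hs => ?_
  have : (s ^ 2)⁻¹ ≤ (t ^ 2)⁻¹ := by gcongr; exact hs.le
  gcongr

lemma isEquivalent_integral_Ioi_exp_neg_sq_div_two :
    (fun t => ∫ s in Ioi t, exp (-s ^ 2 / 2)) ~[atTop] fun t => exp (-t ^ 2 / 2) / t := by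
  refine isEquivalent_of_tendsto_one ?_
  have hlow : Tendsto (fun t : ℝ => (1 + (t ^ 2)⁻¹)⁻¹) atTop (𝓝 1) := by
    simpa using ((tendsto_inv_atTop_zero.comp (tendsto_pow_atTop two_ne_zero)).const_add
      (1 : ℝ)).inv₀ (by norm_num)
  refine tendsto_of_tendsto_of_tendsto_of_le_of_le' hlow tendsto_const_nhds ?_ ?_ <;>
    filter_upwards [eventually_gt_atTop 0] with t ht <;>
    have hq : 0 < exp (-t ^ 2 / 2) / t := by positivity
  · rw [Pi.div_apply, inv_le_iff_one_le_mul₀ (by positivity), div_mul_eq_mul_div,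
      one_le_div₀ hq, mul_comm]
    exact exp_neg_sq_div_two_div_le_integral_Ioi ht
  · rw [Pi.div_apply, div_le_one hq]
    exact integral_Ioi_exp_neg_sq_div_two_le ht

lemma measureReal_gaussianReal_Ioi (t : ℝ) :
    (gaussianReal 0 1).real (Ioi t) = (√(2 * π))⁻¹ * ∫ s in Ioi t, exp (-s ^ 2 / 2) := by
  rw [measureReal_def, gaussianReal_apply_eq_integral 0 one_ne_zero,
    ENNReal.toReal_ofReal (integral_nonneg fun s => gaussianPDFReal_nonneg 0 1 s),
    ← integral_const_mul]
  simp [gaussianPDFReal_def]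

lemma isEquivalent_gaussianReal_Ioi :
    (fun t => (gaussianReal 0 1).real (Ioi t)) ~[atTop]
      fun t => exp (-t ^ 2 / 2) / (√(2 * π) * t) := by
  have h := (IsEquivalent.refl (u := fun _ : ℝ => (√(2 * π))⁻¹)).mul
    isEquivalent_integral_Ioi_exp_neg_sq_div_two
  simp_rw [measureReal_gaussianReal_Ioi]
  refine h.congr_right (Eventually.of_forall fun t => ?_)
  simp only [Pi.mul_apply]
  field_simp

noncomputable def gumbelThreshold (z a : ℝ) : ℝ := a + (z - log (√(2 * π) * a)) / a

lemma tendsto_sub_log_sqrt_two_pi_mul_div_atTop (z : ℝ) :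
    Tendsto (fun a => (z - log (√(2 * π) * a)) / a) atTop (𝓝 0) := by
  have hc : 0 < √(2 * π) := by positivity
  have hlog : Tendsto (fun x => (z - log x) / x) atTop (𝓝 0) := by
    have := (tendsto_const_nhds (x := z)).div_atTop tendsto_id |>.sub
      (by simpa using tendsto_pow_log_div_mul_add_atTop 1 0 1 one_ne_zero)
    simpa [sub_div] using this
  have := (hlog.comp (tendsto_id.const_mul_atTop hc)).const_mul √(2 * π)
  rw [mul_zero] at this
  refine this.congr fun a => ?_
  simp only [Function.comp_apply, id]
  rw [mul_div_assoc', mul_div_mul_left _ _ hc.ne']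

lemma tendsto_gumbelThreshold_atTop (z : ℝ) : Tendsto (gumbelThreshold z) atTop atTop :=
  tendsto_id.atTop_add (tendsto_sub_log_sqrt_two_pi_mul_div_atTop z)

lemma exp_sq_div_two_mul_exp_neg_sq_div_two {a : ℝ} (ha : a ≠ 0) (z c : ℝ) :
    exp (a ^ 2 / 2) * exp (-(a + (z - c) / a) ^ 2 / 2) =
      exp (-z) * exp c * exp (-((z - c) / a) ^ 2 / 2) := by
  rw [← exp_add, ← exp_add, ← exp_add]
  congr 1
  field_simp
  ring

lemma tendsto_exp_sq_div_two_mul_gumbelThreshold (z : ℝ) :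
    Tendsto (fun a => exp (a ^ 2 / 2) *
      (exp (-gumbelThreshold z a ^ 2 / 2) / (√(2 * π) * gumbelThreshold z a)))
      atTop (𝓝 (exp (-z))) := by
  have hg := tendsto_sub_log_sqrt_two_pi_mul_div_atTop z
  have hexp : Tendsto (fun a => exp (-((z - log (√(2 * π) * a)) / a) ^ 2 / 2)) atTop (𝓝 1) := by
    have := (continuous_exp.tendsto _).comp ((hg.pow 2).neg.div_const 2)
    rwa [zero_pow two_ne_zero, neg_zero, zero_div, exp_zero] at this
  have hratio : Tendsto (fun a => 1 + (z - log (√(2 * π) * a)) / a / a) atTop (𝓝 1) := by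
    simpa using (hg.div_atTop tendsto_id).const_add 1
  have := ((tendsto_const_nhds (x := exp (-z))).mul hexp).div hratio one_ne_zero
  rw [mul_one, div_one] at this
  refine this.congr' ?_
  filter_upwards [eventually_gt_atTop 0] with a ha
  have hc : 0 < √(2 * π) * a := by positivity
  rw [← mul_div_assoc, gumbelThreshold, exp_sq_div_two_mul_exp_neg_sq_div_two ha.ne', exp_log hc,
    Pi.div_apply]
  field_simp

lemma tendsto_exp_sq_div_two_mul_gaussianReal_Ioi_gumbelThreshold (z : ℝ) :
    Tendsto (fun a => exp (a ^ 2 / 2) * (gaussianReal 0 1).real (Ioi (gumbelThreshold z a)))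
      atTop (𝓝 (exp (-z))) :=
  ((IsEquivalent.refl (u := fun a : ℝ => exp (a ^ 2 / 2))).mul
    (isEquivalent_gaussianReal_Ioi.comp_tendsto
      (tendsto_gumbelThreshold_atTop z))).tendsto_nhds_iff.2
    (tendsto_exp_sq_div_two_mul_gumbelThreshold z)

lemma orderStat_self_le_iff {n : ℕ} (hn : 0 < n) (v : Fin n → ℝ) (x : ℝ) :
    orderStat v n ≤ x ↔ ∀ j, v j ≤ x := by
  have hlast : n - 1 < n := by omega
  have hmax (j : Fin n) : v j ≤ v (Tuple.sort v ⟨n - 1, hlast⟩) := by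
    simpa using Tuple.monotone_sort v (show (Tuple.sort v).symm j ≤ ⟨n - 1, hlast⟩ from
      Fin.le_def.2 (Nat.le_sub_one_of_lt ((Tuple.sort v).symm j).isLt))
  rw [orderStat, dif_pos hlast]
  exact ⟨fun h j => (hmax j).trans h, fun h => h _⟩

lemma measurable_orderStat_self {Ω : Type*} [MeasurableSpace Ω] {n : ℕ} {X : Fin n → Ω → ℝ}
    (hX : ∀ j, Measurable (X j)) : Measurable fun ω => orderStat (fun j => X j ω) n := by
  rcases Nat.eq_zero_or_pos n with rfl | hn
  · simp [orderStat]
  refine measurable_of_Iic fun x => ?_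
  have : (fun ω => orderStat (fun j => X j ω) n) ⁻¹' Iic x = ⋂ j, X j ⁻¹' Iic x := by
    ext ω
    simp [orderStat_self_le_iff hn]
  rw [this]
  exact MeasurableSet.iInter fun j => hX j measurableSet_Iic

lemma measureReal_orderStat_self_le {Ω : Type*} [MeasurableSpace Ω] {P : Measure Ω}
    {Z : ℕ → Ω → ℝ} {ν : Measure ℝ} (hmeas : ∀ i, Measurable (Z i)) (hindep : iIndepFun Z P)
    (hdist : ∀ i, P.map (Z i) = ν) {n : ℕ} (hn : 0 < n) (x : ℝ) :
    P.real {ω | orderStat (fun j : Fin n => Z j ω) n ≤ x} = ν.real (Iic x) ^ n := by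
  have hset : {ω | orderStat (fun j : Fin n => Z j ω) n ≤ x} =
      ⋂ i ∈ Finset.range n, Z i ⁻¹' Iic x := by
    ext ω
    simp [orderStat_self_le_iff hn, Fin.forall_iff]
  rw [hset, measureReal_def,
    hindep.measure_inter_preimage_eq_mul _ (sets := fun _ => Iic x) fun _ _ => measurableSet_Iic,
    ENNReal.toReal_prod]
  simp_rw [← measureReal_def, ← map_measureReal_apply (hmeas _) measurableSet_Iic, hdist]
  simp

theorem MeasureTheory.ProbabilityMeasure.tendsto_of_forall_tendsto_measureReal_Iic {ι : Type*}
    {l : Filter ι} [l.IsCountablyGenerated] {μ : ι → ProbabilityMeasure ℝ}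
    {ν : ProbabilityMeasure ℝ}
    (h : ∀ x, Tendsto (fun i => (μ i : Measure ℝ).real (Iic x)) l
      (𝓝 ((ν : Measure ℝ).real (Iic x)))) :
    Tendsto μ l (𝓝 ν) := by
  have hIoc (ρ : Measure ℝ) [IsFiniteMeasure ρ] {a b : ℝ} (hab : a ≤ b) :
      ρ.real (Ioc a b) = ρ.real (Iic b) - ρ.real (Iic a) := by
    rw [← Iic_sdiff_Iic, measureReal_sdiff (Iic_subset_Iic.2 hab) measurableSet_Iic]
  refine (isPiSystem_Ioc id id).tendsto_probabilityMeasure_of_tendsto_of_mem ?_ ?_ ?_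
  · rintro _ ⟨a, b, -, rfl⟩
    exact measurableSet_Ioc
  · intro u hu x hx
    obtain ⟨ε, hε, hball⟩ := Metric.isOpen_iff.mp hu x hx
    refine ⟨Ioc (x - ε) (x + ε / 2), ⟨x - ε, x + ε / 2, by simp only [id]; linarith, rfl⟩,
      Ioc_mem_nhds (by linarith) (by linarith), ?_⟩
    rw [Real.ball_eq_Ioo] at hball
    exact (Ioc_subset_Ioo_right (by linarith)).trans hball
  · rintro _ ⟨a, b, hab, rfl⟩
    rw [← NNReal.tendsto_coe]
    simp_rw [← ProbabilityMeasure.measureReal_eq_coe_coeFn, hIoc _ hab.le]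
    exact (h b).sub (h a)

noncomputable def normalizedMax {Ω : Type*} (Z : ℕ → Ω → ℝ) (n : ℕ) (ω : Ω) : ℝ :=
  √(2 * log n) * orderStat (fun j : Fin n => Z j ω) n - 2 * log n + 1 / 2 * log (4 * π * log n)

lemma measurable_normalizedMax {Ω : Type*} [MeasurableSpace Ω] {Z : ℕ → Ω → ℝ}
    (hmeas : ∀ i, Measurable (Z i)) (n : ℕ) : Measurable (normalizedMax Z n) :=
  (((measurable_orderStat_self fun _ => hmeas _).const_mul _).sub_const _).add_const _

lemma normalizedMax_le_iff {Ω : Type*} (Z : ℕ → Ω → ℝ) {n : ℕ} (hn : 2 ≤ n) (ω : Ω) (z : ℝ) :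
    normalizedMax Z n ω ≤ z ↔
      orderStat (fun j : Fin n => Z j ω) n ≤ gumbelThreshold z √(2 * log n) := by
  have hlog : 0 < log n := log_pos (by exact_mod_cast hn)
  set a := √(2 * log n)
  have ha : 0 < a := by positivity
  have ha2 : a ^ 2 = 2 * log n := sq_sqrt (by positivity)
  have hc : 1 / 2 * log (4 * π * log n) = log (√(2 * π) * a) := by
    rw [← sqrt_mul (by positivity), log_sqrt (by positivity)]
    ring_nf
  rw [normalizedMax, gumbelThreshold, hc, ← sub_le_iff_le_add', le_div_iff₀ ha]
  constructor <;> intro h <;> nlinarith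

lemma tendsto_measureReal_normalizedMax_le {Ω : Type*} [MeasurableSpace Ω] {P : Measure Ω}
    {Z : ℕ → Ω → ℝ} (hmeas : ∀ i, Measurable (Z i)) (hindep : iIndepFun Z P)
    (hdist : ∀ i, P.map (Z i) = gaussianReal 0 1) (z : ℝ) :
    Tendsto (fun n => P.real {ω | normalizedMax Z n ω ≤ z}) atTop (𝓝 (exp (-exp (-z)))) := by
  have hlog : Tendsto (fun n : ℕ => log n) atTop atTop :=
    tendsto_log_atTop.comp tendsto_natCast_atTop_atTop
  have ha : Tendsto (fun n : ℕ => √(2 * log n)) atTop atTop :=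
    tendsto_sqrt_atTop.comp (hlog.const_mul_atTop two_pos)
  set q := fun n : ℕ => (gaussianReal 0 1).real (Ioi (gumbelThreshold z √(2 * log n)))
  have hq : Tendsto (fun n : ℕ => n * -q n) atTop (𝓝 (-exp (-z))) := by
    refine ((tendsto_exp_sq_div_two_mul_gaussianReal_Ioi_gumbelThreshold z).comp ha).neg.congr' ?_
    filter_upwards [eventually_ge_atTop 1] with n hn
    have hn' : (1 : ℝ) ≤ n := by exact_mod_cast hn
    rw [Function.comp_apply, sq_sqrt (by positivity [log_nonneg hn']),
      mul_div_cancel_left₀ _ two_ne_zero, exp_log (by positivity), mul_neg]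
  refine (tendsto_one_add_pow_exp_of_tendsto hq).congr' ?_
  filter_upwards [eventually_ge_atTop 2] with n hn
  simp_rw [normalizedMax_le_iff Z hn,
    measureReal_orderStat_self_le hmeas hindep hdist (zero_lt_two.trans_le hn)]
  rw [← sub_eq_add_neg, ← probReal_compl_eq_one_sub measurableSet_Ioi, compl_Ioi]

/-- For i.i.d. standard normal `Z_1, Z_2, …` with sample maximum `Z_(n)` of the first `n`
variables, `√(2 log n) · Z_(n) − 2 log n + (1/2) log(4π log n)` converges in distribution to
the standard Gumbel distribution `G₃`, whose CDF is `exp(−e^{−z})`. -/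
theorem normalized_maximum_tendsto_gumbel
    {Ω : Type*} [MeasurableSpace Ω] (P : Measure Ω) [IsProbabilityMeasure P]
    (Z : ℕ → Ω → ℝ)
    (hmeas : ∀ i, Measurable (Z i))
    (hindep : iIndepFun Z P)
    (hdist : ∀ i, Measure.map (Z i) P = gaussianReal 0 1)
    (G : Measure ℝ) (hGprob : IsProbabilityMeasure G)
    (hGcdf : ∀ z : ℝ, G (Set.Iic z) = ENNReal.ofReal (Real.exp (-Real.exp (-z)))) :
    ∀ f : ℝ →ᵇ ℝ,
      Tendsto (fun n : ℕ => ∫ ω, f (Real.sqrt (2 * Real.log n) *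
            orderStat (fun j : Fin n => Z j ω) n
          - 2 * Real.log n + (1 / 2) * Real.log (4 * Real.pi * Real.log n)) ∂P)
        atTop (𝓝 (∫ x, f x ∂G)) := by
  intro f
  have hW := measurable_normalizedMax hmeas
  let μ : ℕ → ProbabilityMeasure ℝ := fun n =>
    ⟨P.map (normalizedMax Z n), Measure.isProbabilityMeasure_map (hW n).aemeasurable⟩
  have hcdf (z : ℝ) : Tendsto (fun n => (μ n : Measure ℝ).real (Iic z)) atTop
      (𝓝 (((⟨G, hGprob⟩ : ProbabilityMeasure ℝ) : Measure ℝ).real (Iic z))) := by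
    simp only [μ, ProbabilityMeasure.coe_mk, map_measureReal_apply (hW _) measurableSet_Iic]
    rw [measureReal_def, hGcdf, ENNReal.toReal_ofReal (exp_pos _).le]
    exact tendsto_measureReal_normalizedMax_le hmeas hindep hdist z
  have hweak := ProbabilityMeasure.tendsto_of_forall_tendsto_measureReal_Iic hcdf
  have hconv := ProbabilityMeasure.tendsto_iff_forall_integral_tendsto.1 hweak f
  simp only [μ, ProbabilityMeasure.coe_mk,
    integral_map (hW _).aemeasurable f.continuous.aestronglyMeasurable] at hconv
  exact hconv
end

section
/- Let Z_1, Z_2, … be an infinite sequence of independent standard normal random variables, and for each n let Z_(1) and Z_(n) denote the minimum and maximum of Z_1, …, Z_n. Set M_n = √(2 log n) · Z_(n) − 2 log n + (1/2) log(4π log n) and m_n = √(2 log n) · Z_(1) + 2 log n − (1/2) log(4π log n). Then the pair (M_n, m_n) converges jointly in distribution to the law of (Y, −W), where Y and W are independent random variables each having the standard Gumbel distribution G_3 with cumulative distribution function exp(−e^{−z}). -/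
open MeasureTheory ProbabilityTheory Filter Topology BoundedContinuousFunction

/-!
Write `T(t) = P(Z > t)` and `u_n(x) = (x + b_n) / a_n` with `a_n = √(2 log n)` and
`b_n = 2 log n - log(4π log n) / 2`. The event `{M_n ≤ x, m_n ≥ y}` says that every `Z_j` lies in
`[-u_n(-y), u_n(x)]`, so by independence and symmetry it has probability
`(1 - T(u_n(x)) - T(u_n(-y)))^n`. Mills' ratio `T(t) ~ φ(t) / t` and the choice of `a_n, b_n` give
`n T(u_n(x)) → e^{-x}`, hence this probability tends to `exp(-e^{-x}) exp(-e^{y})`, the mass of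
`(-∞, x] × [y, ∞)` under the law of `(Y, -W)`. Convergence of these quadrant masses is enough for
weak convergence on `ℝ²`: the boxes `(a, b] × [c, d)` form a π-system of arbitrarily small
neighbourhoods, and the mass of a box is an alternating sum of four quadrant masses.
-/

open Set Real Asymptotics

section OrderStatistics

variable {n : ℕ}

lemma orderStat_last_eq_iSup [NeZero n] (v : Fin n → ℝ) : orderStat v n = ⨆ i, v i := by
  have hlt : n - 1 < n := Nat.sub_one_lt (NeZero.ne n)
  rw [orderStat, dif_pos hlt]
  refine le_antisymm (le_ciSup (Finite.bddAbove_range v) _) (ciSup_le fun j => ?_)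
  obtain ⟨i, rfl⟩ := (Tuple.sort v).surjective j
  exact Tuple.monotone_sort v (Fin.mk_le_mk.2 (Nat.le_sub_one_of_lt i.2) : i ≤ ⟨n - 1, hlt⟩)

lemma orderStat_one_eq_iInf [NeZero n] (v : Fin n → ℝ) : orderStat v 1 = ⨅ i, v i := by
  have hlt : 1 - 1 < n := Nat.pos_of_neZero n
  rw [orderStat, dif_pos hlt]
  refine le_antisymm (le_ciInf fun j => ?_) (ciInf_le (Finite.bddBelow_range v) _)
  obtain ⟨i, rfl⟩ := (Tuple.sort v).surjective j
  exact Tuple.monotone_sort v (Fin.mk_le_mk.2 (Nat.zero_le i) : ⟨1 - 1, hlt⟩ ≤ i)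

variable {Ω : Type*} [MeasurableSpace Ω] {X : Fin n → Ω → ℝ}

lemma measurable_orderStat_last (hX : ∀ i, Measurable (X i)) :
    Measurable fun ω => orderStat (fun i => X i ω) n := by
  rcases eq_zero_or_neZero n with rfl | _
  · simp [orderStat]
  · simpa only [orderStat_last_eq_iSup] using Measurable.iSup hX

lemma measurable_orderStat_one (hX : ∀ i, Measurable (X i)) :
    Measurable fun ω => orderStat (fun i => X i ω) 1 := by
  rcases eq_zero_or_neZero n with rfl | _
  · simp [orderStat]
  · simpa only [orderStat_one_eq_iInf] using Measurable.iInf hX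

end OrderStatistics

section WeakConvergence

variable {α β : Type*} [MeasurableSpace α] [MeasurableSpace β]

lemma measureReal_sdiff_prod_sdiff (ν : Measure (α × β)) [IsFiniteMeasure ν]
    {A A' : Set α} {B B' : Set β} (hA : MeasurableSet A) (hB : MeasurableSet B)
    (hA' : MeasurableSet A') (hB' : MeasurableSet B') (hAA' : A' ⊆ A) (hBB' : B' ⊆ B) :
    ν.real ((A \ A') ×ˢ (B \ B')) =
      ν.real (A ×ˢ B) - ν.real (A' ×ˢ B) - ν.real (A ×ˢ B') + ν.real (A' ×ˢ B') := by
  have hdiff : (A \ A') ×ˢ (B \ B') = A ×ˢ B \ (A' ×ˢ B ∪ A ×ˢ B') := by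
    ext ⟨a, b⟩; simp only [mem_prod, Set.mem_sdiff, mem_union]; tauto
  have hinter : A' ×ˢ B ∩ A ×ˢ B' = A' ×ˢ B' := by
    rw [prod_inter_prod, inter_eq_left.2 hAA', inter_eq_right.2 hBB']
  have hsub : A' ×ˢ B ∪ A ×ˢ B' ⊆ A ×ˢ B :=
    union_subset (prod_mono hAA' subset_rfl) (prod_mono subset_rfl hBB')
  have hunion := measureReal_union_add_inter (μ := ν) (s := A' ×ˢ B) (hA.prod hB')
  rw [hinter] at hunion
  rw [hdiff, measureReal_sdiff hsub ((hA'.prod hB).union (hA.prod hB'))]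
  linarith

theorem ProbabilityMeasure.tendsto_of_tendsto_Iic_prod_Ici {ι : Type*} {l : Filter ι}
    [l.IsCountablyGenerated] {μs : ι → ProbabilityMeasure (ℝ × ℝ)} {μ : ProbabilityMeasure (ℝ × ℝ)}
    (h : ∀ x y, Tendsto (fun i ↦ (μs i (Iic x ×ˢ Ici y) : ℝ)) l
      (𝓝 (μ (Iic x ×ˢ Ici y) : ℝ))) :
    Tendsto μs l (𝓝 μ) := by
  let boxes : Set (Set (ℝ × ℝ)) :=
    image2 (· ×ˢ ·) {s | ∃ a ∈ univ, ∃ b ∈ univ, a < b ∧ Ioc a b = s}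
      {s | ∃ c ∈ univ, ∃ d ∈ univ, c < d ∧ Ico c d = s}
  have hpi : IsPiSystem boxes := (isPiSystem_Ioc_mem univ univ).prod (isPiSystem_Ico_mem univ univ)
  refine hpi.tendsto_probabilityMeasure_of_tendsto_of_mem ?_ ?_ ?_
  · rintro _ ⟨_, ⟨a, -, b, -, -, rfl⟩, _, ⟨c, -, d, -, -, rfl⟩, rfl⟩
    exact measurableSet_Ioc.prod measurableSet_Ico
  · intro U hU p hp
    obtain ⟨ε, hε, hball⟩ := Metric.isOpen_iff.1 hU p hp
    refine ⟨Ioc (p.1 - ε / 2) (p.1 + ε / 2) ×ˢ Ico (p.2 - ε / 2) (p.2 + ε / 2),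
      mem_image2_of_mem ⟨_, trivial, _, trivial, by linarith, rfl⟩
        ⟨_, trivial, _, trivial, by linarith, rfl⟩,
      prod_mem_nhds (Ioc_mem_nhds (by linarith) (by linarith))
        (Ico_mem_nhds (by linarith) (by linarith)), ?_⟩
    refine Subset.trans ?_ hball
    rw [← ball_prod_same, Real.ball_eq_Ioo, Real.ball_eq_Ioo]
    exact prod_mono (Ioc_subset_Ioo (by linarith) (by linarith))
      (Ico_subset_Ioo (by linarith) (by linarith))
  · rintro _ ⟨_, ⟨a, -, b, -, hab, rfl⟩, _, ⟨c, -, d, -, hcd, rfl⟩, rfl⟩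
    rw [← NNReal.tendsto_coe, ← Iic_sdiff_Iic, ← Ici_sdiff_Ici]
    simp only [← ProbabilityMeasure.measureReal_eq_coe_coeFn]
    simp_rw [measureReal_sdiff_prod_sdiff _ measurableSet_Iic measurableSet_Ici measurableSet_Iic
      measurableSet_Ici (Iic_subset_Iic.2 hab.le) (Ici_subset_Ici.2 hcd.le)]
    simp only [ProbabilityMeasure.measureReal_eq_coe_coeFn]
    exact (((h b c).sub (h a c)).sub (h b d)).add (h a d)

end WeakConvergence

section GaussianTail

lemma gaussianPDFReal_zero_one (x : ℝ) :
    gaussianPDFReal 0 1 x = (√(2 * π))⁻¹ * exp (-x ^ 2 / 2) := by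
  simp [gaussianPDFReal]

lemma hasDerivAt_gaussianPDFReal_zero_one (x : ℝ) :
    HasDerivAt (gaussianPDFReal 0 1) (-x * gaussianPDFReal 0 1 x) x := by
  have h : HasDerivAt (fun y : ℝ => -y ^ 2 / 2) (-x) x :=
    ((hasDerivAt_pow 2 x).neg.div_const 2).congr_deriv (by simp; ring)
  rw [show gaussianPDFReal 0 1 = _ from funext gaussianPDFReal_zero_one]
  exact (h.exp.const_mul _).congr_deriv (by ring)

lemma tendsto_gaussianPDFReal_zero_one_atTop :
    Tendsto (gaussianPDFReal 0 1) atTop (𝓝 0) := by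
  have h : Tendsto (fun y : ℝ => -y ^ 2 / 2) atTop atBot :=
    (tendsto_neg_atTop_atBot.comp (tendsto_pow_atTop two_ne_zero)).atBot_div_const two_pos
  simpa [funext gaussianPDFReal_zero_one] using
    (tendsto_exp_atBot.comp h).const_mul (√(2 * π))⁻¹

lemma measureReal_gaussianReal_eq_integral (μ : ℝ) {v : NNReal} (hv : v ≠ 0) (s : Set ℝ) :
    (gaussianReal μ v).real s = ∫ x in s, gaussianPDFReal μ v x := by
  rw [measureReal_def, gaussianReal_apply_eq_integral μ hv,
    ENNReal.toReal_ofReal (integral_nonneg fun x => gaussianPDFReal_nonneg μ v x)]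

lemma hasDerivAt_neg_mul_gaussianPDFReal {p : ℝ → ℝ} {p' x : ℝ} (hp : HasDerivAt p p' x) :
    HasDerivAt (fun y => -(p y * gaussianPDFReal 0 1 y))
      ((x * p x - p') * gaussianPDFReal 0 1 x) x :=
  (hp.mul (hasDerivAt_gaussianPDFReal_zero_one x)).neg.congr_deriv (by ring)

lemma integral_Ioi_mul_gaussianPDFReal {p p' : ℝ → ℝ} {t : ℝ}
    (hp : ∀ x ∈ Ici t, HasDerivAt p (p' x) x) (hp0 : Tendsto p atTop (𝓝 0))
    (hpos : ∀ x ∈ Ioi t, 0 ≤ x * p x - p' x) :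
    IntegrableOn (fun x => (x * p x - p' x) * gaussianPDFReal 0 1 x) (Ioi t) ∧
      ∫ x in Ioi t, (x * p x - p' x) * gaussianPDFReal 0 1 x = p t * gaussianPDFReal 0 1 t := by
  have hderiv := fun x hx => hasDerivAt_neg_mul_gaussianPDFReal (hp x hx)
  have hnonneg : ∀ x ∈ Ioi t, 0 ≤ (x * p x - p' x) * gaussianPDFReal 0 1 x :=
    fun x hx => mul_nonneg (hpos x hx) (gaussianPDFReal_nonneg 0 1 x)
  have hlim : Tendsto (fun y => -(p y * gaussianPDFReal 0 1 y)) atTop (𝓝 0) := by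
    simpa using (hp0.mul tendsto_gaussianPDFReal_zero_one_atTop).neg
  refine ⟨integrableOn_Ioi_deriv_of_nonneg' hderiv hnonneg hlim, ?_⟩
  rw [integral_Ioi_of_hasDerivAt_of_nonneg' hderiv hnonneg hlim]
  ring

lemma measureReal_gaussianReal_Ioi_le {t : ℝ} (ht : 0 < t) :
    (gaussianReal 0 1).real (Ioi t) ≤ gaussianPDFReal 0 1 t / t := by
  have hp : ∀ x ∈ Ici t, HasDerivAt (fun y : ℝ => y⁻¹) (-(x ^ 2)⁻¹) x :=
    fun x hx => hasDerivAt_inv (ht.trans_le hx).ne'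
  have hweight : ∀ x ∈ Ioi t, 1 ≤ x * x⁻¹ - -(x ^ 2)⁻¹ := fun x hx => by
    rw [mul_inv_cancel₀ (ht.trans hx).ne']; linarith [inv_nonneg.2 (sq_nonneg x)]
  obtain ⟨hint, heq⟩ := integral_Ioi_mul_gaussianPDFReal hp tendsto_inv_atTop_zero
    fun x hx => zero_le_one.trans (hweight x hx)
  calc (gaussianReal 0 1).real (Ioi t) = ∫ x in Ioi t, gaussianPDFReal 0 1 x :=
        measureReal_gaussianReal_eq_integral 0 one_ne_zero _
    _ ≤ ∫ x in Ioi t, (x * x⁻¹ - -(x ^ 2)⁻¹) * gaussianPDFReal 0 1 x :=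
        setIntegral_mono_on (integrable_gaussianPDFReal 0 1).integrableOn hint measurableSet_Ioi
          fun x hx => le_mul_of_one_le_left (gaussianPDFReal_nonneg 0 1 x) (hweight x hx)
    _ = gaussianPDFReal 0 1 t / t := by rw [heq, div_eq_inv_mul]

lemma le_measureReal_gaussianReal_Ioi {t : ℝ} (ht : 2 ≤ t) :
    (1 - (t ^ 2)⁻¹) * (gaussianPDFReal 0 1 t / t) ≤ (gaussianReal 0 1).real (Ioi t) := by
  have ht0 : 0 < t := by linarith
  have hp : ∀ x ∈ Ici t, HasDerivAt (fun y : ℝ => y⁻¹ - y⁻¹ ^ 3) (-x⁻¹ ^ 2 + 3 * x⁻¹ ^ 4) x :=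
    fun x hx => ((hasDerivAt_inv (ht0.trans_le hx).ne').sub
      ((hasDerivAt_inv (ht0.trans_le hx).ne').pow 3)).congr_deriv (by push_cast; ring)
  have hweight : ∀ x ∈ Ioi t, x * (x⁻¹ - x⁻¹ ^ 3) - (-x⁻¹ ^ 2 + 3 * x⁻¹ ^ 4) = 1 - 3 * x⁻¹ ^ 4 :=
    fun x hx => by field_simp [(ht0.trans hx).ne']; ring
  have hsmall : ∀ x ∈ Ioi t, 3 * x⁻¹ ^ 4 ≤ 1 := fun x hx => by
    have : x⁻¹ ≤ 2⁻¹ := inv_anti₀ two_pos (ht.trans hx.le)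
    have := pow_le_pow_left₀ (inv_nonneg.2 (ht0.trans hx).le) this 4
    linarith
  have hlim : Tendsto (fun y : ℝ => y⁻¹ - y⁻¹ ^ 3) atTop (𝓝 0) := by
    simpa using (tendsto_inv_atTop_zero (𝕜 := ℝ)).sub (tendsto_inv_atTop_zero.pow 3)
  obtain ⟨hint, heq⟩ := integral_Ioi_mul_gaussianPDFReal hp hlim
    fun x hx => by rw [hweight x hx]; linarith [hsmall x hx]
  calc (1 - (t ^ 2)⁻¹) * (gaussianPDFReal 0 1 t / t)
      = (t⁻¹ - t⁻¹ ^ 3) * gaussianPDFReal 0 1 t := by field_simp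
    _ = ∫ x in Ioi t, (x * (x⁻¹ - x⁻¹ ^ 3) - (-x⁻¹ ^ 2 + 3 * x⁻¹ ^ 4)) * gaussianPDFReal 0 1 x :=
        heq.symm
    _ ≤ ∫ x in Ioi t, gaussianPDFReal 0 1 x :=
        setIntegral_mono_on hint (integrable_gaussianPDFReal 0 1).integrableOn measurableSet_Ioi
          fun x hx => by
            rw [hweight x hx]
            exact mul_le_of_le_one_left (gaussianPDFReal_nonneg 0 1 x)
              (by linarith [pow_pos (inv_pos.2 (ht0.trans hx)) 4])
    _ = (gaussianReal 0 1).real (Ioi t) :=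
        (measureReal_gaussianReal_eq_integral 0 one_ne_zero _).symm

theorem measureReal_gaussianReal_Ioi_isEquivalent :
    (fun t => (gaussianReal 0 1).real (Ioi t)) ~[atTop] fun t => gaussianPDFReal 0 1 t / t := by
  refine isEquivalent_of_tendsto_one ?_
  have hlow : Tendsto (fun t : ℝ => 1 - (t ^ 2)⁻¹) atTop (𝓝 1) := by
    simpa using ((tendsto_inv_atTop_zero (𝕜 := ℝ)).comp
      (tendsto_pow_atTop two_ne_zero)).const_sub 1
  refine tendsto_of_tendsto_of_tendsto_of_le_of_le' hlow tendsto_const_nhds ?_ ?_ <;>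
    filter_upwards [eventually_ge_atTop 2] with t ht <;>
    have hφ : 0 < gaussianPDFReal 0 1 t / t :=
      div_pos (gaussianPDFReal_pos 0 1 t one_ne_zero) (by linarith)
  · exact (le_div_iff₀ hφ).2 (le_measureReal_gaussianReal_Ioi ht)
  · exact (div_le_one hφ).2 (measureReal_gaussianReal_Ioi_le (by linarith))

end GaussianTail

section GumbelLevel

/-- `u_n(x) = (x + b_n) / a_n` as a function of `s = log n`, so that `M_n ≤ x ↔ Z_(n) ≤ u_n(x)`. -/
noncomputable def gumbelLevel (s x : ℝ) : ℝ := (x + 2 * s - 1 / 2 * log (4 * π * s)) / √(2 * s)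

lemma tendsto_log_div_sqrt_atTop : Tendsto (fun s => log s / √s) atTop (𝓝 0) := by
  refine ((isLittleO_log_rpow_atTop (r := 1 / 2) (by norm_num)).tendsto_div_nhds_zero).congr
    fun s => ?_
  rw [sqrt_eq_rpow]

lemma tendsto_sub_log_div_sqrt (x : ℝ) :
    Tendsto (fun s => (x - 1 / 2 * log (4 * π * s)) / √(2 * s)) atTop (𝓝 0) := by
  have h : Tendsto (fun s => ((x - 1 / 2 * log (4 * π)) * (√s)⁻¹ - 1 / 2 * (log s / √s)) / √2)
      atTop (𝓝 0) := by
    have h0 := (((tendsto_inv_atTop_zero.comp tendsto_sqrt_atTop).const_mul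
      (x - 1 / 2 * log (4 * π))).sub (tendsto_log_div_sqrt_atTop.const_mul (1 / 2))).div_const √2
    rwa [mul_zero, mul_zero, sub_zero, zero_div] at h0
  refine h.congr' ?_
  filter_upwards [eventually_gt_atTop 0] with s hs
  rw [log_mul (by positivity) hs.ne', sqrt_mul zero_le_two]
  field_simp
  ring

lemma gumbelLevel_eq_add {s : ℝ} (hs : 0 < s) (x : ℝ) :
    gumbelLevel s x = √(2 * s) + (x - 1 / 2 * log (4 * π * s)) / √(2 * s) := by
  have ha : √(2 * s) ^ 2 = 2 * s := sq_sqrt (by positivity)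
  have ha0 : √(2 * s) ≠ 0 := by positivity
  rw [gumbelLevel]
  field_simp
  rw [ha]
  ring

lemma tendsto_gumbelLevel_atTop (x : ℝ) : Tendsto (gumbelLevel · x) atTop atTop := by
  have ha : Tendsto (fun s : ℝ => √(2 * s)) atTop atTop :=
    tendsto_sqrt_atTop.comp (tendsto_id.const_mul_atTop two_pos)
  refine (ha.atTop_add (tendsto_sub_log_div_sqrt x)).congr' ?_
  filter_upwards [eventually_gt_atTop 0] with s hs
  exact (gumbelLevel_eq_add hs x).symm

/-- With `a = √(2s)` and `c = log(4πs) / 2` one has `s - u²/2 = c - x - (u - a)²/2` and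
`e^c = √(2π) a`. -/
lemma exp_mul_gaussianPDFReal_div_gumbelLevel {s : ℝ} (hs : 0 < s) (x : ℝ) :
    exp s * (gaussianPDFReal 0 1 (gumbelLevel s x) / gumbelLevel s x) =
      exp (-x) * exp (-(gumbelLevel s x - √(2 * s)) ^ 2 / 2) * (√(2 * s) / gumbelLevel s x) := by
  set u := gumbelLevel s x
  set a := √(2 * s)
  set c := 1 / 2 * log (4 * π * s) with hc_def
  have ha0 : 0 < a := by positivity
  have ha : a ^ 2 = 2 * s := sq_sqrt (by positivity)
  have hu : u = a + (x - c) / a := gumbelLevel_eq_add hs x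
  have hd : a * (u - a) = x - c := by rw [hu, add_sub_cancel_left]; field_simp
  have hc : exp c = √(2 * π) * a := by
    rw [hc_def, one_div_mul_eq_div, exp_half, exp_log (by positivity), ← sqrt_mul (by positivity)]
    ring_nf
  have hexp : exp s * exp (-u ^ 2 / 2) = exp c * exp (-x) * exp (-(u - a) ^ 2 / 2) := by
    simp only [← exp_add]
    congr 1
    linear_combination (-1 / 2) * ha - hd
  rw [gaussianPDFReal_zero_one, ← mul_div_assoc, ← mul_assoc, mul_right_comm, hexp, hc]
  field_simp

lemma tendsto_gumbelLevel_sub_sqrt (x : ℝ) :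
    Tendsto (fun s => gumbelLevel s x - √(2 * s)) atTop (𝓝 0) := by
  refine (tendsto_sub_log_div_sqrt x).congr' ?_
  filter_upwards [eventually_gt_atTop 0] with s hs
  rw [gumbelLevel_eq_add hs, add_sub_cancel_left]

lemma tendsto_exp_mul_gaussianPDFReal_div_gumbelLevel (x : ℝ) :
    Tendsto (fun s => exp s * (gaussianPDFReal 0 1 (gumbelLevel s x) / gumbelLevel s x)) atTop
      (𝓝 (exp (-x))) := by
  have hd := tendsto_gumbelLevel_sub_sqrt x
  have hu := tendsto_gumbelLevel_atTop x
  have hratio : Tendsto (fun s => √(2 * s) / gumbelLevel s x) atTop (𝓝 1) := by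
    have h := (hd.mul (tendsto_inv_atTop_zero.comp hu)).const_sub 1
    rw [mul_zero, sub_zero] at h
    refine h.congr' ?_
    filter_upwards [hu.eventually_gt_atTop 0] with s hs
    simp only [Function.comp_apply]
    field_simp
    ring
  have hgauss : Tendsto (fun s => exp (-(gumbelLevel s x - √(2 * s)) ^ 2 / 2)) atTop (𝓝 1) := by
    simpa [Function.comp_def] using (continuous_exp.tendsto _).comp ((hd.pow 2).neg.div_const 2)
  have h := (hgauss.const_mul (exp (-x))).mul hratio
  rw [mul_one, mul_one] at h
  refine h.congr' ?_
  filter_upwards [eventually_gt_atTop 0] with s hs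
  rw [exp_mul_gaussianPDFReal_div_gumbelLevel hs]

lemma tendsto_exp_mul_gaussianReal_Ioi_gumbelLevel (x : ℝ) :
    Tendsto (fun s => exp s * (gaussianReal 0 1).real (Ioi (gumbelLevel s x))) atTop
      (𝓝 (exp (-x))) :=
  ((IsEquivalent.refl.mul (measureReal_gaussianReal_Ioi_isEquivalent.comp_tendsto
    (tendsto_gumbelLevel_atTop x))).tendsto_nhds_iff).2
    (tendsto_exp_mul_gaussianPDFReal_div_gumbelLevel x)

lemma tendsto_nat_mul_gaussianReal_Ioi_gumbelLevel (x : ℝ) :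
    Tendsto (fun n : ℕ => n * (gaussianReal 0 1).real (Ioi (gumbelLevel (log n) x))) atTop
      (𝓝 (exp (-x))) := by
  refine ((tendsto_exp_mul_gaussianReal_Ioi_gumbelLevel x).comp
    (tendsto_log_atTop.comp tendsto_natCast_atTop_atTop)).congr' ?_
  filter_upwards [eventually_gt_atTop 0] with n hn
  simp [exp_log (Nat.cast_pos.2 hn)]

end GumbelLevel

section Extremes

lemma ProbabilityTheory.iIndepFun.measure_iInter_preimage_eq_pow {ι Ω α : Type*} [Fintype ι]
    [MeasurableSpace Ω] [MeasurableSpace α] {P : Measure Ω} {X : ι → Ω → α} {μ : Measure α}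
    (hindep : iIndepFun X P) (hmeas : ∀ i, Measurable (X i)) (hlaw : ∀ i, P.map (X i) = μ)
    {S : Set α} (hS : MeasurableSet S) :
    P (⋂ i, X i ⁻¹' S) = μ S ^ Fintype.card ι := by
  rw [hindep.meas_iInter fun i => ⟨S, hS, rfl⟩, ← Finset.card_univ, ← Finset.prod_const]
  exact Finset.prod_congr rfl fun i _ => by rw [← hlaw i, Measure.map_apply (hmeas i) hS]

lemma measureReal_gaussianReal_Iio_neg (σ : NNReal) (t : ℝ) :
    (gaussianReal 0 σ).real (Iio (-t)) = (gaussianReal 0 σ).real (Ioi t) := by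
  have hsymm : (gaussianReal 0 σ).map (fun x => -x) = gaussianReal 0 σ := by
    simpa using gaussianReal_map_neg (μ := 0) (v := σ)
  rw [← hsymm, map_measureReal_apply measurable_neg measurableSet_Ioi]
  congr 1
  ext x
  simp

lemma measureReal_gaussianReal_Icc_neg (σ : NNReal) {t u : ℝ} (h : -t ≤ u) :
    (gaussianReal 0 σ).real (Icc (-t) u) =
      1 - (gaussianReal 0 σ).real (Ioi u) - (gaussianReal 0 σ).real (Ioi t) := by
  have hcompl : Icc (-t) u = (Iio (-t) ∪ Ioi u)ᶜ := by
    rw [compl_union, compl_Iio, compl_Ioi, Ici_inter_Iic]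
  rw [hcompl, measureReal_compl (measurableSet_Iio.union measurableSet_Ioi),
    measureReal_union ((Iic_disjoint_Ioi h).mono_left Iio_subset_Iic_self) measurableSet_Ioi,
    measureReal_gaussianReal_Iio_neg, probReal_univ]
  ring

noncomputable def normalizedExtremes {Ω : Type*} (Z : ℕ → Ω → ℝ) (n : ℕ) (ω : Ω) : ℝ × ℝ :=
  (√(2 * log n) * orderStat (fun j : Fin n => Z j ω) n - 2 * log n + 1 / 2 * log (4 * π * log n),
   √(2 * log n) * orderStat (fun j : Fin n => Z j ω) 1 + 2 * log n - 1 / 2 * log (4 * π * log n))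

variable {Ω : Type*} {Z : ℕ → Ω → ℝ}

lemma normalizedExtremes_preimage_Iic_prod_Ici {n : ℕ} (hn : 2 ≤ n) (x y : ℝ) :
    normalizedExtremes Z n ⁻¹' (Iic x ×ˢ Ici y) =
      ⋂ j : Fin n, Z j ⁻¹' Icc (-gumbelLevel (log n) (-y)) (gumbelLevel (log n) x) := by
  have : NeZero n := ⟨by omega⟩
  have ha : 0 < √(2 * log n) := sqrt_pos.2 (mul_pos two_pos (log_pos (by norm_cast)))
  have hmax : ∀ M : ℝ, √(2 * log n) * M - 2 * log n + 1 / 2 * log (4 * π * log n) ≤ x ↔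
      M ≤ gumbelLevel (log n) x := fun M => by
    rw [gumbelLevel, le_div_iff₀ ha, mul_comm M]
    constructor <;> intro h <;> linarith
  have hmin : ∀ m : ℝ, y ≤ √(2 * log n) * m + 2 * log n - 1 / 2 * log (4 * π * log n) ↔
      -gumbelLevel (log n) (-y) ≤ m := fun m => by
    rw [gumbelLevel, ← neg_div, div_le_iff₀ ha, mul_comm m]
    constructor <;> intro h <;> linarith
  ext ω
  simp only [normalizedExtremes, mem_preimage, mem_prod, mem_Iic, mem_Ici, mem_iInter, mem_Icc,
    forall_and, orderStat_last_eq_iSup, orderStat_one_eq_iInf, hmax, hmin,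
    ciSup_le_iff (Finite.bddAbove_range _), le_ciInf_iff (Finite.bddBelow_range _)]
  exact and_comm

variable [MeasurableSpace Ω] {P : Measure Ω}

lemma measurable_normalizedExtremes (hmeas : ∀ i, Measurable (Z i)) (n : ℕ) :
    Measurable (normalizedExtremes Z n) :=
  .prodMk
    ((((measurable_orderStat_last fun j : Fin n => hmeas j).const_mul _).sub_const _).add_const _)
    ((((measurable_orderStat_one fun j : Fin n => hmeas j).const_mul _).add_const _).sub_const _)

lemma tendsto_measureReal_normalizedExtremes_Iic_prod_Ici (hmeas : ∀ i, Measurable (Z i))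
    (hindep : iIndepFun Z P) (hdist : ∀ i, P.map (Z i) = gaussianReal 0 1) (x y : ℝ) :
    Tendsto (fun n => P.real (normalizedExtremes Z n ⁻¹' (Iic x ×ˢ Ici y))) atTop
      (𝓝 (exp (-exp (-x)) * exp (-exp y))) := by
  have hsum : Tendsto (fun n : ℕ => n * -((gaussianReal 0 1).real (Ioi (gumbelLevel (log n) x)) +
      (gaussianReal 0 1).real (Ioi (gumbelLevel (log n) (-y))))) atTop
      (𝓝 (-(exp (-x) + exp y))) := by
    simpa [mul_add] using ((tendsto_nat_mul_gaussianReal_Ioi_gumbelLevel x).add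
      (tendsto_nat_mul_gaussianReal_Ioi_gumbelLevel (-y))).neg
  have hlog : Tendsto (fun n : ℕ => log n) atTop atTop :=
    tendsto_log_atTop.comp tendsto_natCast_atTop_atTop
  rw [← exp_add, ← neg_add]
  refine (tendsto_one_add_pow_exp_of_tendsto hsum).congr' ?_
  filter_upwards [eventually_ge_atTop 2,
    ((tendsto_gumbelLevel_atTop x).comp hlog).eventually_ge_atTop 0,
    ((tendsto_gumbelLevel_atTop (-y)).comp hlog).eventually_ge_atTop 0] with n hn hx hy
  have hindep' : iIndepFun (fun j : Fin n => Z j) P := hindep.precomp Fin.val_injective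
  rw [eq_comm, normalizedExtremes_preimage_Iic_prod_Ici hn, measureReal_def,
    hindep'.measure_iInter_preimage_eq_pow (fun j => hmeas j) (fun j => hdist j) measurableSet_Icc,
    Fintype.card_fin, ENNReal.toReal_pow, ← measureReal_def,
    measureReal_gaussianReal_Icc_neg 1 (by simp only [Function.comp_apply] at hx hy; linarith)]
  ring

end Extremes

lemma measureReal_prod_map_neg_Iic_prod_Ici (G : Measure ℝ) [IsFiniteMeasure G] (x y : ℝ) :
    (G.prod (G.map fun x => -x)).real (Iic x ×ˢ Ici y) = G.real (Iic x) * G.real (Iic (-y)) := by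
  rw [measureReal_prod_prod, map_measureReal_apply measurable_neg measurableSet_Ici]
  congr 2
  ext z
  simp

/-- For i.i.d. standard normal `Z_1, Z_2, …`, the pair of the normalized maximum
`M_n = √(2 log n) Z_(n) − 2 log n + (1/2) log(4π log n)` and normalized minimum
`m_n = √(2 log n) Z_(1) + 2 log n − (1/2) log(4π log n)` converges jointly in distribution to
the law of `(Y, −W)` with `Y, W` independent standard Gumbel, i.e. to the product of the
standard Gumbel measure `G₃` and the pushforward of `G₃` under negation. -/
theorem normalized_extremes_joint_tendsto
    {Ω : Type*} [MeasurableSpace Ω] (P : Measure Ω) [IsProbabilityMeasure P]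
    (Z : ℕ → Ω → ℝ)
    (hmeas : ∀ i, Measurable (Z i))
    (hindep : iIndepFun Z P)
    (hdist : ∀ i, Measure.map (Z i) P = gaussianReal 0 1)
    (G : Measure ℝ) (hGprob : IsProbabilityMeasure G)
    (hGcdf : ∀ z : ℝ, G (Set.Iic z) = ENNReal.ofReal (Real.exp (-Real.exp (-z)))) :
    ∀ f : (ℝ × ℝ) →ᵇ ℝ,
      Tendsto (fun n : ℕ => ∫ ω, f
          (Real.sqrt (2 * Real.log n) * orderStat (fun j : Fin n => Z j ω) n
             - 2 * Real.log n + (1 / 2) * Real.log (4 * Real.pi * Real.log n),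
           Real.sqrt (2 * Real.log n) * orderStat (fun j : Fin n => Z j ω) 1
             + 2 * Real.log n - (1 / 2) * Real.log (4 * Real.pi * Real.log n)) ∂P)
        atTop (𝓝 (∫ x, f x ∂(G.prod (Measure.map (fun x : ℝ => -x) G)))) := by
  intro f
  have := hGprob
  have : IsProbabilityMeasure (G.map fun x => -x) :=
    Measure.isProbabilityMeasure_map measurable_neg.aemeasurable
  have hX n := (measurable_normalizedExtremes hmeas n).aemeasurable (μ := P)
  let μs (n : ℕ) : ProbabilityMeasure (ℝ × ℝ) :=
    ⟨P.map (normalizedExtremes Z n), Measure.isProbabilityMeasure_map (hX n)⟩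
  let μ : ProbabilityMeasure (ℝ × ℝ) := ⟨G.prod (G.map fun x => -x), inferInstance⟩
  have hGreal (z : ℝ) : G.real (Iic z) = exp (-exp (-z)) := by
    rw [measureReal_def, hGcdf, ENNReal.toReal_ofReal (exp_pos _).le]
  have hconv : Tendsto μs atTop (𝓝 μ) := by
    refine ProbabilityMeasure.tendsto_of_tendsto_Iic_prod_Ici fun x y => ?_
    change Tendsto (fun n => (P.map (normalizedExtremes Z n)).real (Iic x ×ˢ Ici y)) atTop
      (𝓝 ((G.prod (G.map fun x => -x)).real (Iic x ×ˢ Ici y)))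
    simp only [map_measureReal_apply (measurable_normalizedExtremes hmeas _)
        (measurableSet_Iic.prod measurableSet_Ici),
      measureReal_prod_map_neg_Iic_prod_Ici, hGreal, neg_neg]
    exact tendsto_measureReal_normalizedExtremes_Iic_prod_Ici hmeas hindep hdist x y
  refine (ProbabilityMeasure.tendsto_iff_forall_integral_tendsto.1 hconv f).congr fun n => ?_
  exact integral_map (hX n) f.continuous.aestronglyMeasurable
end

section
/- If Y and W are independent random variables each having the standard Gumbel distribution G_3 with cumulative distribution function exp(−e^{−z}), then the random variable (Y − W)/2 follows the logistic distribution L(0, 1/2); that is, its law is the probability measure on ℝ with cumulative distribution function z ↦ 1/(1 + e^{−2z}). -/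
/-!
By independence, `P((Y - W)/2 ≤ z) = ∫ F(w + 2z) dG(w)` with `F(x) = exp(-e^{-x})`. The Gumbel law
has density `e^{-w} exp(-e^{-w})`, and `F(w + t) = exp(-e^{-t} e^{-w})`, so the integrand is
`e^{-w} exp(-b e^{-w})` with `b = 1 + e^{-t}`. This is `b⁻¹` times the derivative of
`exp(-b e^{-w})`, which increases from `0` to `1`; hence the integral is `1/(1 + e^{-t})`.
-/

open MeasureTheory ProbabilityTheory Filter Topology BoundedContinuousFunction

open Real Set

theorem integrable_deriv_of_nonneg_of_tendsto {g g' : ℝ → ℝ} {l₁ l₂ : ℝ}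
    (hderiv : ∀ x, HasDerivAt g (g' x) x) (hg' : ∀ x, 0 ≤ g' x)
    (hbot : Tendsto g atBot (𝓝 l₁)) (htop : Tendsto g atTop (𝓝 l₂)) : Integrable g' := by
  refine integrable_of_intervalIntegral_norm_tendsto (l₂ - l₁)
    (fun i => intervalIntegral.integrableOn_deriv_of_nonneg
      (HasDerivAt.continuousOn fun x _ => hderiv x) (fun x _ => hderiv x) fun x _ => hg' x)
    tendsto_neg_atTop_atBot tendsto_id ?_
  have hftc : ∀ i, ∫ x in -i..id i, ‖g' x‖ = g i - g (-i) := fun i => by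
    simp only [Real.norm_of_nonneg (hg' _), id]
    exact intervalIntegral.integral_eq_sub_of_hasDerivAt (fun x _ => hderiv x)
      (intervalIntegral.intervalIntegrable_deriv_of_nonneg
        (HasDerivAt.continuousOn fun x _ => hderiv x) (fun x _ => hderiv x) fun x _ => hg' x)
  simp_rw [hftc]
  exact htop.sub (hbot.comp tendsto_neg_atTop_atBot)

theorem hasDerivAt_exp_neg_mul_exp_neg (b x : ℝ) :
    HasDerivAt (fun x => exp (-(b * exp (-x)))) (b * exp (-x) * exp (-(b * exp (-x)))) x := by
  have := ((((hasDerivAt_neg x).exp).const_mul b).neg).exp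
  convert this using 1
  · simp
  · simp only [Pi.neg_apply]
    ring

theorem tendsto_exp_neg_mul_exp_neg_atBot {b : ℝ} (hb : 0 < b) :
    Tendsto (fun x => exp (-(b * exp (-x)))) atBot (𝓝 0) :=
  tendsto_exp_atBot.comp <| tendsto_neg_atTop_atBot.comp <|
    (tendsto_exp_atTop.comp tendsto_neg_atBot_atTop).const_mul_atTop hb

theorem tendsto_exp_neg_mul_exp_neg_atTop (b : ℝ) :
    Tendsto (fun x => exp (-(b * exp (-x)))) atTop (𝓝 1) := by
  simpa [Function.comp_def] using
    (continuous_exp.tendsto _).comp (tendsto_exp_neg_atTop_nhds_zero.const_mul b).neg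

theorem integrable_mul_exp_neg_mul_exp_neg {b : ℝ} (hb : 0 < b) :
    Integrable fun x => b * exp (-x) * exp (-(b * exp (-x))) :=
  integrable_deriv_of_nonneg_of_tendsto (hasDerivAt_exp_neg_mul_exp_neg b)
    (fun _ => by positivity) (tendsto_exp_neg_mul_exp_neg_atBot hb)
    (tendsto_exp_neg_mul_exp_neg_atTop b)

theorem integral_Iic_mul_exp_neg_mul_exp_neg {b : ℝ} (hb : 0 < b) (a : ℝ) :
    ∫ x in Iic a, b * exp (-x) * exp (-(b * exp (-x))) = exp (-(b * exp (-a))) := by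
  simpa using integral_Iic_of_hasDerivAt_of_tendsto'
    (fun x _ => hasDerivAt_exp_neg_mul_exp_neg b x)
    (integrable_mul_exp_neg_mul_exp_neg hb).integrableOn (tendsto_exp_neg_mul_exp_neg_atBot hb)

theorem integral_mul_exp_neg_mul_exp_neg {b : ℝ} (hb : 0 < b) :
    ∫ x, b * exp (-x) * exp (-(b * exp (-x))) = 1 := by
  simpa using integral_of_hasDerivAt_of_tendsto (hasDerivAt_exp_neg_mul_exp_neg b)
    (integrable_mul_exp_neg_mul_exp_neg hb) (tendsto_exp_neg_mul_exp_neg_atBot hb)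
    (tendsto_exp_neg_mul_exp_neg_atTop b)

theorem ProbabilityTheory.IndepFun.measure_preimage_prodMk_eq_lintegral {Ω α β : Type*}
    [MeasurableSpace Ω] [MeasurableSpace α] [MeasurableSpace β] {P : Measure Ω}
    [IsFiniteMeasure P] {X : Ω → α} {Y : Ω → β} (hX : Measurable X) (hY : Measurable Y)
    (h : IndepFun X Y P) {s : Set (α × β)} (hs : MeasurableSet s) :
    P ((fun ω => (X ω, Y ω)) ⁻¹' s) = ∫⁻ x, P.map Y (Prod.mk x ⁻¹' s) ∂P.map X := by
  rw [← Measure.map_apply (hX.prodMk hY) hs,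
    h.map_prod_eq_prod_map_map hX.aemeasurable hY.aemeasurable, Measure.prod_apply hs]

noncomputable def gumbelMeasure : Measure ℝ :=
  volume.withDensity fun x => ENNReal.ofReal (exp (-x) * exp (-exp (-x)))

theorem gumbelMeasure_Iic (a : ℝ) :
    gumbelMeasure (Iic a) = ENNReal.ofReal (exp (-exp (-a))) := by
  rw [gumbelMeasure, withDensity_apply _ measurableSet_Iic, ← ofReal_integral_eq_lintegral_ofReal
    (by simpa using (integrable_mul_exp_neg_mul_exp_neg one_pos).restrict)
    (ae_of_all _ fun _ => by positivity)]
  simpa using congrArg ENNReal.ofReal (integral_Iic_mul_exp_neg_mul_exp_neg one_pos a)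

instance : IsProbabilityMeasure gumbelMeasure := by
  constructor
  rw [gumbelMeasure, withDensity_apply _ MeasurableSet.univ, Measure.restrict_univ,
    ← ofReal_integral_eq_lintegral_ofReal
    (by simpa using integrable_mul_exp_neg_mul_exp_neg one_pos)
    (ae_of_all _ fun _ => by positivity)]
  simpa using congrArg ENNReal.ofReal (integral_mul_exp_neg_mul_exp_neg one_pos)

theorem lintegral_gumbelMeasure_Iic_add (t : ℝ) :
    ∫⁻ x, gumbelMeasure (Iic (x + t)) ∂gumbelMeasure = ENNReal.ofReal (1 / (1 + exp (-t))) := by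
  set b := 1 + exp (-t) with hbdef
  have hb : 0 < b := by positivity
  have hintegrand (x : ℝ) : exp (-x) * exp (-exp (-x)) * exp (-exp (-(x + t)))
      = b⁻¹ * (b * exp (-x) * exp (-(b * exp (-x)))) := by
    have hshift : exp (-(x + t)) = exp (-t) * exp (-x) := by rw [← exp_add]; ring_nf
    have hsplit : exp (-(b * exp (-x))) = exp (-exp (-x)) * exp (-(exp (-t) * exp (-x))) := by
      rw [← exp_add, hbdef]; ring_nf
    rw [hshift, hsplit]
    field_simp
  calc ∫⁻ x, gumbelMeasure (Iic (x + t)) ∂gumbelMeasure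
      = ∫⁻ x, ENNReal.ofReal b⁻¹ * ENNReal.ofReal (b * exp (-x) * exp (-(b * exp (-x)))) := by
        simp_rw [gumbelMeasure_Iic]
        rw [gumbelMeasure, lintegral_withDensity_eq_lintegral_mul _ (by fun_prop) (by fun_prop)]
        refine lintegral_congr fun x => ?_
        rw [Pi.mul_apply, ← ENNReal.ofReal_mul (by positivity), hintegrand,
          ENNReal.ofReal_mul (by positivity)]
    _ = ENNReal.ofReal (1 / b) := by
        rw [lintegral_const_mul _ (by fun_prop), ← ofReal_integral_eq_lintegral_ofReal
          (integrable_mul_exp_neg_mul_exp_neg hb) (ae_of_all _ fun _ => by positivity),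
          integral_mul_exp_neg_mul_exp_neg hb, ENNReal.ofReal_one, mul_one, one_div]

/-- If `Y` and `W` are independent random variables each with the standard Gumbel distribution
(CDF `exp(−e^{−z})`), then `(Y − W)/2` follows the logistic distribution `L(0, 1/2)`:
its law has CDF `z ↦ 1/(1 + e^{−2z})`. -/
theorem gumbel_difference_logistic
    {Ω : Type*} [MeasurableSpace Ω] (P : Measure Ω) [IsProbabilityMeasure P]
    (Y W : Ω → ℝ) (hY : Measurable Y) (hW : Measurable W)
    (hindep : IndepFun Y W P)
    (G : Measure ℝ)
    (hGcdf : ∀ z : ℝ, G (Set.Iic z) = ENNReal.ofReal (Real.exp (-Real.exp (-z))))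
    (hYlaw : Measure.map Y P = G) (hWlaw : Measure.map W P = G) :
    ∀ z : ℝ, Measure.map (fun ω => (Y ω - W ω) / 2) P (Set.Iic z)
      = ENNReal.ofReal (1 / (1 + Real.exp (-2 * z))) := by
  intro z
  have hG : G = gumbelMeasure :=
    (Measure.ext_of_Iic gumbelMeasure G fun a => by rw [gumbelMeasure_Iic, hGcdf]).symm
  have hevent : (fun ω => (Y ω - W ω) / 2) ⁻¹' Iic z
      = (fun ω => (W ω, Y ω)) ⁻¹' {p | p.2 ≤ p.1 + 2 * z} := by
    ext ω
    simp only [mem_preimage, mem_Iic, mem_ofPred_eq]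
    constructor <;> intro h <;> linarith
  rw [Measure.map_apply (by fun_prop) measurableSet_Iic, hevent,
    hindep.symm.measure_preimage_prodMk_eq_lintegral hW hY
      (measurableSet_le measurable_snd (by fun_prop)),
    hWlaw, hYlaw, hG, neg_mul]
  exact lintegral_gumbelMeasure_Iic_add (2 * z)
end
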